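/- Any board of 10 distinct points in F_3^4 contains at most 12 sets. -/

import Mathlib

/-
Two points of a board lie on at most one common set, so the sets through a point p pair off the
other points and p lies on at most 4 of them. With 13 sets the degrees would sum to 39 > 30, so
some point has degree 4; translate it to 0. The other nine points are then four pairs {x, -x},
which make up A, and one point z with -z outside the board. Each x ∈ A lies on at most 3 sets
avoiding 0, which gives 3·#(sets in A) + 2·#(sets through z) ≤ 24; since negation acts without
fixed points on the sets in A, their number is even, and only the case of 6 sets in A, 3 through
z and equality everywhere is left. Then some pair ±u meets no set through z, so the six sets in A
are the three through u and the three through -u. For a set {z, a, q}, the set {-q, a, q - a}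
forces q - a = ±u, and the set through a and ∓u has third point -z: a contradiction.
-/

abbrev Pt := Fin 4 → ZMod 3

def numSets (B : Finset Pt) : ℕ :=
  ((B.powersetCard 3).filter (fun S => S.sum id = 0)).card

def IsMagicSquare (B : Finset Pt) : Prop :=
  ∃ (p : Pt) (V : Submodule (ZMod 3) Pt), Module.finrank (ZMod 3) V = 2 ∧
    (B : Set Pt) = (fun v => p + v) '' (V : Set Pt)

open Finset

namespace SetGame

section Lines

variable {V : Type*} [AddCommGroup V] [DecidableEq V]

-- Over `ZMod 3` the sets are exactly the affine lines.
def lines (B : Finset V) : Finset (Finset V) :=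
  (B.powersetCard 3).filter (fun S => S.sum id = 0)

lemma mem_lines {B S : Finset V} : S ∈ lines B ↔ S ⊆ B ∧ #S = 3 ∧ S.sum id = 0 := by
  simp [lines, mem_powersetCard, and_assoc]

lemma eq_of_mem_lines {B S : Finset V} {p q : V} (hS : S ∈ lines B) (hp : p ∈ S) (hq : q ∈ S)
    (hpq : p ≠ q) : S = {p, q, -p - q} := by
  obtain ⟨-, hcard, hsum⟩ := mem_lines.mp hS
  have hq' : q ∈ S.erase p := mem_erase.mpr ⟨hpq.symm, hq⟩
  obtain ⟨r, hr⟩ : ∃ r, (S.erase p).erase q = {r} := by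
    rw [← card_eq_one, card_erase_of_mem hq', card_erase_of_mem hp, hcard]
  have hpqr : p + (q + r) = 0 := by
    rw [← hsum, ← add_sum_erase S id hp, ← add_sum_erase _ id hq', hr, sum_singleton]
    rfl
  have hr' : r = -p - q := by linear_combination (norm := module) hpqr
  rw [← insert_erase hp, ← insert_erase hq', hr, hr']

lemma neg_sub_mem_of_mem_lines {B S : Finset V} {p q : V} (hS : S ∈ lines B) (hp : p ∈ S)
    (hq : q ∈ S) (hpq : p ≠ q) : -p - q ∈ B :=
  (mem_lines.mp hS).1 (by rw [eq_of_mem_lines hS hp hq hpq]; simp)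

lemma eq_of_mem_of_mem_lines {B S T : Finset V} {p q : V} (hS : S ∈ lines B) (hT : T ∈ lines B)
    (hpS : p ∈ S) (hqS : q ∈ S) (hpT : p ∈ T) (hqT : q ∈ T) (hpq : p ≠ q) : S = T := by
  rw [eq_of_mem_lines hS hpS hqS hpq, eq_of_mem_lines hT hpT hqT hpq]

def deg (B : Finset V) (p : V) : ℕ := #{S ∈ lines B | p ∈ S}

lemma sum_card_filter_mem {α : Type*} [DecidableEq α] (s : Finset α) (F : Finset (Finset α)) :
    ∑ x ∈ s, #{S ∈ F | x ∈ S} = ∑ S ∈ F, #(s ∩ S) := by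
  simp_rw [← filter_mem_eq_inter, card_eq_sum_ones, sum_filter]
  exact sum_comm

lemma sum_deg (B : Finset V) : ∑ p ∈ B, deg B p = 3 * #(lines B) := by
  simp only [deg]
  rw [sum_card_filter_mem, sum_congr rfl fun S hS => ?_, sum_const, smul_eq_mul,
    mul_comm]
  obtain ⟨hSB, hS3, -⟩ := mem_lines.mp hS
  rw [inter_eq_right.mpr hSB, hS3]

lemma lines_erase (B : Finset V) (p : V) : lines (B.erase p) = {S ∈ lines B | p ∉ S} := by
  ext S
  simp only [mem_filter, mem_lines, subset_erase]
  tauto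

lemma card_lines_eq_deg_add (B : Finset V) (p : V) :
    #(lines B) = deg B p + #(lines (B.erase p)) := by
  rw [lines_erase, deg, card_filter_add_card_filter_not]

lemma mem_or_mem_of_card_lines_le {B : Finset V} {x y : V}
    (hxy : ∀ S ∈ lines B, x ∈ S → y ∉ S) (h : #(lines B) ≤ deg B x + deg B y) :
    ∀ S ∈ lines B, x ∈ S ∨ y ∈ S := by
  refine card_filter_eq_iff.mp (le_antisymm (card_filter_le _ _) ?_)
  rwa [filter_or, card_union_of_disjoint (disjoint_filter.mpr hxy)]

lemma neg_sub_mem_of_forall_lines {A : Finset V} {u a : V}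
    (hcover : ∀ S ∈ lines A, u ∈ S ∨ -u ∈ S) (hau : a ≠ u) (hau' : a ≠ -u) (hdeg : 1 < deg A a) :
    -a - u ∈ A ∧ -a - -u ∈ A := by
  obtain ⟨S, hS, T, hT, hST⟩ := one_lt_card.mp hdeg
  obtain ⟨hS, haS⟩ := mem_filter.mp hS
  obtain ⟨hT, haT⟩ := mem_filter.mp hT
  rcases hcover S hS with huS | huS <;> rcases hcover T hT with huT | huT
  · exact absurd (eq_of_mem_of_mem_lines hS hT haS huS haT huT hau) hST
  · exact ⟨neg_sub_mem_of_mem_lines hS haS huS hau, neg_sub_mem_of_mem_lines hT haT huT hau'⟩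
  · exact ⟨neg_sub_mem_of_mem_lines hT haT huT hau, neg_sub_mem_of_mem_lines hS haS huS hau'⟩
  · exact absurd (eq_of_mem_of_mem_lines hS hT haS huS haT huT hau') hST

lemma image_neg_eq_self {B : Finset V} (hneg : ∀ x ∈ B, -x ∈ B) : B.image Neg.neg = B :=
  eq_of_subset_of_card_le (image_subset_iff.mpr hneg) (card_image_of_injective B neg_injective).ge

end Lines

section Char3

variable {V : Type*} [AddCommGroup V] [Module (ZMod 3) V]

lemma add_self_add_self (x : V) : x + x + x = 0 := by
  have h : (3 : ZMod 3) • x = 0 := by rw [show (3 : ZMod 3) = 0 from rfl, zero_smul]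
  rw [← h]
  module

lemma neg_sub_eq_left_iff {p x : V} : -p - x = p ↔ x = p := by
  constructor
  · intro h
    linear_combination (norm := module) -h - add_self_add_self p
  · rintro rfl
    linear_combination (norm := module) -add_self_add_self x

lemma neg_sub_eq_right_iff {p x : V} : -p - x = x ↔ x = p := by
  constructor
  · intro h
    linear_combination (norm := module) h + add_self_add_self x
  · rintro rfl
    linear_combination (norm := module) -add_self_add_self x

lemma neg_ne_self {x : V} (hx : x ≠ 0) : -x ≠ x := by
  simpa using (neg_sub_eq_right_iff (p := 0) (x := x)).not.mpr hx

variable [DecidableEq V]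

lemma insert_mem_lines {B : Finset V} {p q : V} (hp : p ∈ B) (hq : q ∈ B) (hr : -p - q ∈ B)
    (hpq : p ≠ q) : {p, q, -p - q} ∈ lines B := by
  have hpr : p ≠ -p - q := fun h => hpq (neg_sub_eq_left_iff.mp h.symm).symm
  have hqr : q ≠ -p - q := fun h => hpq (neg_sub_eq_right_iff.mp h.symm).symm
  refine mem_lines.mpr ⟨?_, ?_, ?_⟩
  · simp [insert_subset_iff, hp, hq, hr]
  · rw [card_insert_of_notMem (by simp [hpq, hpr]), card_pair hqr]
  · rw [sum_insert (by simp [hpq, hpr]), sum_pair hqr]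
    simp

lemma card_lines_through_pair {B : Finset V} {p x : V} (hp : p ∈ B) (hx : x ∈ B) (hpx : p ≠ x) :
    #{S ∈ lines B | p ∈ S ∧ x ∈ S} = if -p - x ∈ B then 1 else 0 := by
  split_ifs with h
  · refine card_eq_one.mpr ⟨{p, x, -p - x}, ext fun S => ?_⟩
    simp only [mem_filter, mem_singleton]
    constructor
    · rintro ⟨hS, hpS, hxS⟩
      exact eq_of_mem_lines hS hpS hxS hpx
    · rintro rfl
      exact ⟨insert_mem_lines hp hx h hpx, by simp, by simp⟩
  · refine card_eq_zero.mpr (filter_eq_empty_iff.mpr fun S hS ⟨hpS, hxS⟩ => h ?_)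
    exact (mem_lines.mp hS).1 (by rw [eq_of_mem_lines hS hpS hxS hpx]; simp)

lemma deg_erase_add {B : Finset V} {p x : V} (hp : p ∈ B) (hx : x ∈ B) (hpx : p ≠ x) :
    deg (B.erase p) x + (if -p - x ∈ B then 1 else 0) = deg B x := by
  rw [← card_lines_through_pair hp hx hpx, deg, deg, lines_erase, filter_filter,
    ← card_filter_add_card_filter_not (s := {S ∈ lines B | x ∈ S}) (p ∈ ·), filter_filter,
    filter_filter, add_comm]
  simp only [and_comm]

def partners (B : Finset V) (p : V) : Finset V := {x ∈ B.erase p | -p - x ∈ B}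

lemma card_partners {B : Finset V} {p : V} (hp : p ∈ B) : #(partners B p) = 2 * deg B p := by
  have hfilter : ∀ x ∈ B.erase p, #{S ∈ {S ∈ lines B | p ∈ S} | x ∈ S} =
      if -p - x ∈ B then 1 else 0 := fun x hx => by
    rw [filter_filter, ← card_lines_through_pair hp (mem_of_mem_erase hx) (ne_of_mem_erase hx).symm]
  rw [partners, card_filter, ← sum_congr rfl hfilter, sum_card_filter_mem, deg,
    sum_congr rfl fun S hS => ?_, sum_const, smul_eq_mul, mul_comm]
  obtain ⟨hS, hpS⟩ := mem_filter.mp hS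
  obtain ⟨hSB, hS3, -⟩ := mem_lines.mp hS
  rw [erase_inter, inter_eq_right.mpr hSB, card_erase_of_mem hpS, hS3]

lemma two_mul_deg_lt {B : Finset V} {p : V} (hp : p ∈ B) : 2 * deg B p < #B := by
  rw [← card_partners hp, ← card_erase_add_one hp]
  exact Nat.lt_succ_of_le (card_le_card (filter_subset _ _))

-- `hf3` holds for `-·` and, since `3 • c = 0`, for translation by any `c`.
lemma image_mem_lines {B S : Finset V} {f : V → V} (hf : Function.Injective f)
    (hf3 : ∀ x y, f (-x - y) = -f x - f y) (hS : S ∈ lines B) : S.image f ∈ lines (B.image f) := by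
  obtain ⟨p, hp, q, hq, hpq⟩ := one_lt_card.mp (by rw [(mem_lines.mp hS).2.1]; omega)
  have hSB := (mem_lines.mp hS).1
  rw [eq_of_mem_lines hS hp hq hpq, image_insert, image_insert, image_singleton, hf3]
  exact insert_mem_lines (mem_image_of_mem f (hSB hp)) (mem_image_of_mem f (hSB hq))
    (hf3 p q ▸ mem_image_of_mem f (hSB (by rw [eq_of_mem_lines hS hp hq hpq]; simp))) (hf.ne hpq)

lemma lines_image (B : Finset V) (e : V ≃ V) (he : ∀ x y, e (-x - y) = -e x - e y) :
    lines (B.image e) = (lines B).image (image e) := by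
  have he' : ∀ x y, e.symm (-x - y) = -e.symm x - e.symm y := fun x y =>
    e.injective (by rw [he]; simp)
  ext T
  rw [mem_image]
  constructor
  · intro hT
    refine ⟨T.image e.symm, ?_, by simp [image_image]⟩
    simpa [image_image] using image_mem_lines e.symm.injective he' hT
  · rintro ⟨S, hS, rfl⟩
    exact image_mem_lines e.injective he hS

lemma card_lines_image (B : Finset V) (e : V ≃ V) (he : ∀ x y, e (-x - y) = -e x - e y) :
    #(lines (B.image e)) = #(lines B) := by
  rw [lines_image B e he, card_image_of_injective _ (image_injective e.injective)]

lemma deg_image (B : Finset V) (e : V ≃ V) (he : ∀ x y, e (-x - y) = -e x - e y) (x : V) :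
    deg (B.image e) (e x) = deg B x := by
  rw [deg, deg, lines_image B e he, filter_image,
    card_image_of_injective _ (image_injective e.injective)]
  simp only [e.injective.mem_finset_image]

lemma deg_neg {B : Finset V} (hneg : ∀ x ∈ B, -x ∈ B) (x : V) : deg B (-x) = deg B x := by
  simpa [image_neg_eq_self hneg] using deg_image B (Equiv.neg V) (fun x y => by simp only [Equiv.neg_apply]; abel) x

lemma even_card_lines {B : Finset V} (hneg : ∀ x ∈ B, -x ∈ B) (h0 : (0 : V) ∉ B) :
    Even #(lines B) := by
  rw [← ZMod.natCast_eq_zero_iff_even, card_eq_sum_ones, Nat.cast_sum, Nat.cast_one]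
  refine sum_involution (fun S _ => S.image Neg.neg) (fun _ _ => rfl) (fun S hS _ hfix => ?_)
    (fun S hS => ?_) (fun S _ => by simp [image_image])
  · obtain ⟨hSB, hS3, -⟩ := mem_lines.mp hS
    obtain ⟨p, hp⟩ := card_pos.mp (by omega : 0 < #S)
    have hp0 : p ≠ 0 := fun h => h0 (h ▸ hSB hp)
    have hnp : -p ∈ S := hfix ▸ mem_image_of_mem _ hp
    refine h0 (hSB ?_)
    rw [eq_of_mem_lines hS hp hnp (neg_ne_self hp0).symm]
    simp
  · simpa [image_neg_eq_self hneg] using image_mem_lines neg_injective (fun x y => by abel) hS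

lemma exists_forall_lines_mem_or_neg_mem {A : Finset V} {z : V} (hneg : ∀ x ∈ A, -x ∈ A)
    (h0 : (0 : V) ∉ A) (hA : #A = 8) (hs : #(lines A) = 6) (hP : #{x ∈ A | -z - x ∈ A} = 6)
    (hdeg : ∀ x ∈ A, deg A x + (if -z - x ∈ A then 1 else 0) = 3) :
    ∃ u ∈ A, -z - u ∉ A ∧ -z - -u ∉ A ∧ ∀ S ∈ lines A, u ∈ S ∨ -u ∈ S := by
  have hsymm : ∀ x ∈ A, -z - x ∈ A ↔ -z - -x ∈ A := fun x hx => by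
    have h1 := hdeg x hx
    have h2 := hdeg (-x) (hneg x hx)
    rw [deg_neg hneg] at h2
    split_ifs at h1 h2 <;> simp_all
  obtain ⟨u, hu, hzu⟩ : ∃ u ∈ A, -z - u ∉ A := by
    by_contra! h
    have := card_filter_eq_iff.mpr h
    omega
  have hzu' : -z - -u ∉ A := (hsymm u hu).not.mp hzu
  refine ⟨u, hu, hzu, hzu', mem_or_mem_of_card_lines_le (fun S hS huS hnuS => h0 ?_) ?_⟩
  · have hu0 : u ≠ 0 := fun h => h0 (h ▸ hu)
    refine (mem_lines.mp hS).1 ?_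
    rw [eq_of_mem_lines hS huS hnuS (neg_ne_self hu0).symm]
    simp
  · have h1 := hdeg u hu
    have h2 := hdeg (-u) (hneg u hu)
    rw [if_neg hzu] at h1
    rw [if_neg hzu'] at h2
    omega

lemma false_of_tight_counts {A : Finset V} {z : V} (hneg : ∀ x ∈ A, -x ∈ A)
    (h0 : (0 : V) ∉ A) (hz0 : z ≠ 0) (hzA : z ∉ A) (hA : #A = 8) (hs : #(lines A) = 6)
    (hP : #{x ∈ A | -z - x ∈ A} = 6)
    (hdeg : ∀ x ∈ A, deg A x + (if -z - x ∈ A then 1 else 0) = 3) : False := by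
  obtain ⟨u, -, hzu, hzu', hcover⟩ := exists_forall_lines_mem_or_neg_mem hneg h0 hA hs hP hdeg
  obtain ⟨a, ha, q, hq, hzaq⟩ : ∃ a ∈ A, ∃ q ∈ A, z + a + q = 0 := by
    obtain ⟨a, ha⟩ := card_pos.mp (by omega : 0 < #{x ∈ A | -z - x ∈ A})
    exact ⟨a, (mem_filter.mp ha).1, _, (mem_filter.mp ha).2, by abel⟩
  have hza : -z - a = q := by linear_combination (norm := module) -hzaq
  have hzq : -z - q = a := by linear_combination (norm := module) -hzaq
  have hdega : deg A a = 2 := by have := hdeg a ha; rw [hza, if_pos hq] at this; omega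
  have hau : a ≠ u ∧ a ≠ -u := ⟨fun h => hzu (h ▸ hza ▸ hq), fun h => hzu' (h ▸ hza ▸ hq)⟩
  have hqu : -q ≠ u ∧ -q ≠ -u :=
    ⟨fun h => hzu' (by rwa [← h, neg_neg, hzq]), fun h => hzu (by rwa [← neg_inj.mp h, hzq])⟩
  have hqa : q - a ∈ A := by
    have h1 := hdeg (-a) (hneg a ha)
    rw [deg_neg hneg, hdega] at h1
    split_ifs at h1 with h
    · convert h using 1
      linear_combination (norm := module) hzaq - add_self_add_self a
    · omega
  have hL1 : {-q, a, q - a} ∈ lines A := by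
    have hqa' : -(-q) - a ∈ A := by rwa [neg_neg]
    convert insert_mem_lines (hneg q hq) ha hqa' fun h => hz0 ?_ using 3
    · rw [neg_neg]
    · linear_combination (norm := module) hzaq + h
  have hqa_u : q - a = u ∨ q - a = -u := by
    rcases hcover _ hL1 with h | h <;> simp only [mem_insert, mem_singleton] at h
    · exact Or.inl (h.resolve_left (Ne.symm hqu.1) |>.resolve_left (Ne.symm hau.1)).symm
    · exact Or.inr (h.resolve_left (Ne.symm hqu.2) |>.resolve_left (Ne.symm hau.2)).symm
  obtain ⟨hau_mem, hau'_mem⟩ := neg_sub_mem_of_forall_lines hcover hau.1 hau.2 (by omega)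
  have hz : -z = -a - -(q - a) := by linear_combination (norm := module) -hzaq + add_self_add_self a
  have hzA' : -z ∈ A := by
    rcases hqa_u with e | e <;> rw [hz, e]
    · exact hau'_mem
    · rwa [neg_neg]
  exact hzA (by simpa using hneg _ hzA')

lemma deg_insert_add_card_lines_le {A : Finset V} {z : V} (hneg : ∀ x ∈ A, -x ∈ A)
    (h0 : (0 : V) ∉ A) (hz0 : z ≠ 0) (hzA : z ∉ A) (hA : #A = 8)
    (hdeg : ∀ x ∈ A, deg (insert z A) x ≤ 3) : deg (insert z A) z + #(lines A) ≤ 8 := by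
  have hiff : ∀ x ∈ A, -z - x ∈ insert z A ↔ -z - x ∈ A := fun x hx => by
    rw [mem_insert, or_iff_right fun h => hzA ((neg_sub_eq_left_iff (p := z)).mp h ▸ hx)]
  have hdecomp : ∀ x ∈ A, deg A x + (if -z - x ∈ A then 1 else 0) = deg (insert z A) x :=
    fun x hx => by
      have := deg_erase_add (mem_insert_self z A) (mem_insert_of_mem hx) fun h => hzA (h ▸ hx)
      simpa only [erase_insert hzA, hiff x hx] using this
  have hP : #{x ∈ A | -z - x ∈ A} = 2 * deg (insert z A) z := by
    rw [← card_partners (mem_insert_self z A), partners, erase_insert hzA, filter_congr hiff]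
  have hsum : ∑ x ∈ A, (deg A x + if -z - x ∈ A then 1 else 0) =
      3 * #(lines A) + #{x ∈ A | -z - x ∈ A} := by
    rw [sum_add_distrib, sum_deg, card_filter]
  have hle : ∀ x ∈ A, deg A x + (if -z - x ∈ A then 1 else 0) ≤ 3 := fun x hx =>
    (hdecomp x hx).trans_le (hdeg x hx)
  have hsum_le := sum_le_sum hle
  rw [hsum, sum_const, hA, smul_eq_mul] at hsum_le
  have hPA : #{x ∈ A | -z - x ∈ A} ≤ 8 := hA ▸ card_filter_le _ _
  obtain ⟨k, hk⟩ := even_card_lines hneg h0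
  by_contra! hlt
  have htight : ∀ x ∈ A, deg A x + (if -z - x ∈ A then 1 else 0) = 3 := by
    refine (sum_eq_sum_iff_of_le hle).mp ?_
    rw [hsum, sum_const, hA, smul_eq_mul]
    omega
  exact false_of_tight_counts hneg h0 hz0 hzA hA (by omega) (by omega) htight

lemma card_lines_le_of_deg_zero_eq_four {B : Finset V} (hB : #B = 10) (h0 : (0 : V) ∈ B)
    (hdeg0 : deg B 0 = 4) : #(lines B) ≤ 12 := by
  set A := partners B 0
  have hA : #A = 8 := by rw [card_partners h0, hdeg0]
  have hAB : A ⊆ B.erase 0 := filter_subset _ _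
  have hneg : ∀ x ∈ A, -x ∈ A := fun x hx => by
    simp only [A, partners, mem_filter, mem_erase, neg_zero, zero_sub, neg_neg, ne_eq,
      neg_eq_zero] at hx ⊢
    tauto
  have hA0 : (0 : V) ∉ A := fun h => (mem_erase.mp (hAB h)).1 rfl
  obtain ⟨z, hzB, hzA⟩ := exists_mem_notMem_of_card_lt_card
    (by rw [hA, card_erase_of_mem h0, hB]; omega : #A < #(B.erase 0))
  have hBA : B.erase 0 = insert z A := (eq_of_subset_of_card_le (insert_subset hzB hAB)
    (by rw [card_insert_of_notMem hzA, hA, card_erase_of_mem h0, hB])).symm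
  have hdeg : ∀ x ∈ A, deg (insert z A) x ≤ 3 := fun x hx => by
    obtain ⟨hxB, hnx⟩ := mem_filter.mp hx
    have h1 := deg_erase_add h0 (mem_of_mem_erase hxB) (ne_of_mem_erase hxB).symm
    have h2 := two_mul_deg_lt (mem_of_mem_erase hxB)
    rw [if_pos hnx, hBA] at h1
    omega
  have hcore := deg_insert_add_card_lines_le hneg hA0 (ne_of_mem_erase hzB) hzA hA hdeg
  rw [card_lines_eq_deg_add B 0, hdeg0, hBA, card_lines_eq_deg_add _ z, erase_insert hzA]
  omega

lemma card_lines_le_twelve {B : Finset V} (hB : #B = 10) : #(lines B) ≤ 12 := by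
  by_contra! hlt
  obtain ⟨p, hp, hdeg⟩ : ∃ p ∈ B, 3 < deg B p := by
    refine exists_lt_of_sum_lt ?_
    rw [sum_deg, sum_const, hB, smul_eq_mul]
    omega
  have hdeg4 : deg B p = 4 := by have := two_mul_deg_lt hp; omega
  have he : ∀ x y, Equiv.subRight p (-x - y) = -Equiv.subRight p x - Equiv.subRight p y :=
    fun x y => by
      simp only [Equiv.subRight_apply]
      linear_combination (norm := module) -add_self_add_self p
  have h0 : Equiv.subRight p p = 0 := sub_self p
  have := card_lines_le_of_deg_zero_eq_four (B := B.image (Equiv.subRight p))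
    (by rw [card_image_of_injective _ (Equiv.injective _), hB])
    (h0 ▸ mem_image_of_mem _ hp) (by rw [← h0, deg_image B _ he, hdeg4])
  rw [card_lines_image B _ he] at this
  omega

end Char3

end SetGame

theorem stmt14 (B : Finset Pt) (hB : B.card = 10) : numSets B ≤ 12 :=
  SetGame.card_lines_le_twelve hB
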